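/- If (P, A_1,…,A_n) is a regular poset of width w, then P contains no induced copy of the (2w²+1)-ladder, i.e., P is L_{2w²+1}-free. -/

import Mathlib

/-!
Order the antichains by `⊑`, recording the position of `A i` as `level le A i`. Cores compose
along arcs, so any two comparable levels carry a dominating bijection through any given
comparable pair. For a ladder, the points of the level of `x r` lying above earlier rungs number
fewer than `w`, and pushing them (together with `x r`) forward shows that their number strictly
grows from a rung to any later rung lying entirely above it. By pigeonhole, among `2w² + 1` rungs
more than `2w` pairwise overlap, hence all cross a common level. Every comparability factors
through arcs and arcs never cross, so each of these rungs passes through one of the two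
antichains at the ends of the outermost arc they use to cross that level; rungs passing through a
common antichain inject into it, leaving at most `2w` of them.
-/

/-- `S` is an antichain with respect to the order relation `le`. -/
def IsAntichainOn {α : Type*} (le : α → α → Prop) (S : Finset α) : Prop :=
  ∀ a ∈ S, ∀ b ∈ S, a ≠ b → ¬ le a b ∧ ¬ le b a

/-- The poset `(α, le)` has width `w`: there is an antichain of size `w`
and every antichain has size at most `w`. -/
def IsWidth {α : Type*} (le : α → α → Prop) (w : ℕ) : Prop :=
  (∃ S : Finset α, IsAntichainOn le S ∧ S.card = w) ∧
    ∀ S : Finset α, IsAntichainOn le S → S.card ≤ w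

/-- `g` is an `n`-Grundy coloring of the poset `(α, le)`:
`g` takes values in `{1,…,n}`, is surjective onto `{1,…,n}`,
each color class is a chain (G1), and each vertex of color `j`
has an incomparable witness of every smaller color (G3). -/
def IsGrundy {α : Type*} (le : α → α → Prop) (n : ℕ) (g : α → ℕ) : Prop :=
  (∀ v, 1 ≤ g v ∧ g v ≤ n) ∧
  (∀ i, 1 ≤ i → i ≤ n → ∃ v, g v = i) ∧
  (∀ u v, g u = g v → le u v ∨ le v u) ∧
  (∀ v i, 1 ≤ i → i < g v → ∃ u, (¬ le u v ∧ ¬ le v u) ∧ g u = i)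

/-- `c` is the First-Fit chain partition of the poset `(α, le)` presented in the
strict total order `prec`: every vertex `v` gets the least color `c v ≥ 1` such
that all `prec`-earlier vertices of the same color are comparable to `v`. -/
def IsFFColoring {α : Type*} (le prec : α → α → Prop) (c : α → ℕ) : Prop :=
  ∀ v, 1 ≤ c v ∧
    (∀ u, prec u v → c u = c v → le u v ∨ le v u) ∧
    (∀ j, 1 ≤ j → j < c v → ∃ u, prec u v ∧ c u = j ∧ ¬ le u v ∧ ¬ le v u)

/-- The sequences `x` (lower leg) and `y` (upper leg) form an induced copy of
the `m`-ladder `L_m` in the poset `(α, le)`. -/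
def IsLadderIn {α : Type*} (le : α → α → Prop) {m : ℕ} (x y : Fin m → α) : Prop :=
  (∀ i j : Fin m, i < j → le (x i) (x j) ∧ x i ≠ x j) ∧
  (∀ i j : Fin m, i < j → le (y i) (y j) ∧ y i ≠ y j) ∧
  (∀ i : Fin m, le (x i) (y i) ∧ x i ≠ y i) ∧
  (∀ i j : Fin m, i < j → ¬ le (y i) (x j) ∧ ¬ le (x j) (y i))

/-- The poset `(α, le)` contains no induced copy of the `m`-ladder `L_m`. -/
def LFree {α : Type*} (le : α → α → Prop) (m : ℕ) : Prop :=
  ¬ ∃ x y : Fin m → α, IsLadderIn le x y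

/-- `A ⊑ B`: every element of `A` is `le`-below some element of `B`. -/
def Below {α : Type*} (le : α → α → Prop) (A B : Finset α) : Prop :=
  ∀ a ∈ A, ∃ b ∈ B, le a b

/-- `A ⊏ B`: `A ⊑ B` and `A ≠ B`. -/
def StrictBelow {α : Type*} (le : α → α → Prop) (A B : Finset α) : Prop :=
  Below le A B ∧ A ≠ B

/-- The bipartite poset induced by antichains `A` and `B` (with `A` below `B`)
is a core: `|A| = |B|` and every comparable pair `x ≤ y` with `x ∈ A`, `y ∈ B`
is a Dilworth edge, i.e. belongs to a perfect matching of comparable pairs. -/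
def IsCore {α : Type*} (le : α → α → Prop) (A B : Finset α) : Prop :=
  A.card = B.card ∧
    ∀ x ∈ A, ∀ y ∈ B, le x y →
      ∃ f : α → α, Set.BijOn f ↑A ↑B ∧ (∀ a ∈ A, le a (f a)) ∧ f x = y

/-- `A j = A_{s(i)}`: among the antichains presented before `A i`, it is the
`⊑`-least one strictly above `A i`. -/
def IsSuccIdx {α : Type*} (le : α → α → Prop) {n : ℕ} (A : Fin n → Finset α)
    (i j : Fin n) : Prop :=
  j < i ∧ StrictBelow le (A i) (A j) ∧
    ∀ k : Fin n, k < i → StrictBelow le (A i) (A k) → Below le (A j) (A k)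

/-- `A j = A_{p(i)}`: among the antichains presented before `A i`, it is the
`⊑`-greatest one strictly below `A i`. -/
def IsPredIdx {α : Type*} (le : α → α → Prop) {n : ℕ} (A : Fin n → Finset α)
    (i j : Fin n) : Prop :=
  j < i ∧ StrictBelow le (A j) (A i) ∧
    ∀ k : Fin n, k < i → StrictBelow le (A k) (A i) → Below le (A k) (A j)

/-- `(P, A_1, …, A_n)` is a regular poset of width `w`: the `A i` are pairwise
disjoint maximum antichains (each of size `w`, the width of `P`) covering `P`,
linearly ordered by `⊑`; consecutive-at-presentation-time pairs induce cores
(R4); and every comparability with an earlier antichain factors through the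
`⊑`-neighbors at presentation time (R5). -/
def IsRegularPoset {α : Type*} (le : α → α → Prop) (w : ℕ) {n : ℕ}
    (A : Fin n → Finset α) : Prop :=
  (∀ v : α, ∃ i, v ∈ A i) ∧
  (∀ i j : Fin n, i ≠ j → ∀ v ∈ A i, v ∉ A j) ∧
  (∀ i, IsAntichainOn le (A i)) ∧
  (∀ i, (A i).card = w) ∧
  IsWidth le w ∧
  (∀ i j : Fin n, Below le (A i) (A j) ∨ Below le (A j) (A i)) ∧
  (∀ i j : Fin n, IsSuccIdx le A i j → IsCore le (A i) (A j)) ∧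
  (∀ i j : Fin n, IsPredIdx le A i j → IsCore le (A j) (A i)) ∧
  (∀ (i j : Fin n) (x y : α), x ∈ A i → y ∈ A j → le x y → x ≠ y →
    (j < i → ∃ k, IsSuccIdx le A i k ∧ ∃ z ∈ A k, le x z ∧ x ≠ z ∧ le z y) ∧
    (i < j → ∃ k, IsPredIdx le A j k ∧ ∃ z ∈ A k, le x z ∧ le z y ∧ z ≠ y))

/-- `x` is an ascending chain: increasing both in the poset and in color. -/
def IsAscending {α : Type*} (le : α → α → Prop) (g : α → ℕ) {k : ℕ}
    (x : Fin k → α) : Prop :=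
  ∀ i j : Fin k, i < j → (le (x i) (x j) ∧ x i ≠ x j) ∧ g (x i) < g (x j)

/-- `x` is a descending chain: decreasing in the poset, increasing in color. -/
def IsDescending {α : Type*} (le : α → α → Prop) (g : α → ℕ) {k : ℕ}
    (x : Fin k → α) : Prop :=
  ∀ i j : Fin k, i < j → (le (x j) (x i) ∧ x i ≠ x j) ∧ g (x i) < g (x j)

/-- The order of the lexicographic product `P · Q`. -/
def LexLe {α β : Type*} (leP : α → α → Prop) (leQ : β → β → Prop) :
    α × β → α × β → Prop :=
  fun a b => (leP a.1 b.1 ∧ a.1 ≠ b.1) ∨ (a.1 = b.1 ∧ leQ a.2 b.2)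

open Finset

section Below

variable {α : Type*} {le : α → α → Prop}

theorem Below.refl [Std.Refl le] (S : Finset α) : Below le S S :=
  fun a ha => ⟨a, ha, refl_of le a⟩

theorem Below.trans [IsTrans α le] {S T U : Finset α} (hST : Below le S T)
    (hTU : Below le T U) : Below le S U := by
  intro a ha
  obtain ⟨b, hb, hab⟩ := hST a ha
  obtain ⟨c, hc, hbc⟩ := hTU b hb
  exact ⟨c, hc, trans_of le hab hbc⟩

end Below

/-- `(i, j)` is an arc when, at the time the later of `A i` and `A j` was presented, the other one
was its `⊑`-neighbour; `A i` is the lower end. -/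
def IsArc {α : Type*} (le : α → α → Prop) {n : ℕ} (A : Fin n → Finset α) (i j : Fin n) : Prop :=
  IsSuccIdx le A i j ∨ IsPredIdx le A j i

open Classical in
noncomputable def level {α : Type*} (le : α → α → Prop) {n : ℕ} (A : Fin n → Finset α)
    (i : Fin n) : ℕ :=
  #{j | Below le (A j) (A i)}

namespace IsRegularPoset

variable {α : Type*} {le : α → α → Prop} {w n : ℕ} {A : Fin n → Finset α}
  {i j k : Fin n} {x y : α}

theorem index_eq (hA : IsRegularPoset le w A) (hi : x ∈ A i) (hj : x ∈ A j) : i = j :=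
  by_contra fun h => hA.2.1 i j h x hi hj

theorem eq_of_le (hA : IsRegularPoset le w A) (hx : x ∈ A i) (hy : y ∈ A i) (h : le x y) :
    x = y :=
  by_contra fun hne => (hA.2.2.1 i x hx y hy hne).1 h

theorem card_eq (hA : IsRegularPoset le w A) (i : Fin n) : #(A i) = w :=
  hA.2.2.2.1 i

theorem isCore_of_isArc (hA : IsRegularPoset le w A) (h : IsArc le A i j) :
    IsCore le (A i) (A j) :=
  h.elim (hA.2.2.2.2.2.2.1 i j) (hA.2.2.2.2.2.2.2.1 j i)

/-- Every strict comparability is a chain of comparabilities along arcs. -/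
theorem arc_induction (hA : IsRegularPoset le w A) {Q : Fin n → α → Fin n → α → Prop}
    (arc : ∀ {i j x y}, IsArc le A i j → x ∈ A i → y ∈ A j → le x y → Q i x j y)
    (trans : ∀ {i j k x y z}, x ∈ A i → y ∈ A j → z ∈ A k → le x y → le y z →
      Q i x j y → Q j y k z → Q i x k z)
    (hx : x ∈ A i) (hy : y ∈ A j) (hxy : le x y) (hne : x ≠ y) : Q i x j y := by
  induction hN : max i.1 j.1 using Nat.strong_induction_on generalizing i j x y with
  | _ N ih =>
  have hij : i ≠ j := by
    rintro rfl
    exact hne (hA.eq_of_le hx hy hxy)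
  obtain ⟨hdown, hup⟩ := hA.2.2.2.2.2.2.2.2 i j x y hx hy hxy hne
  rcases hij.lt_or_gt with hlt | hlt
  · obtain ⟨k, hk, z, hz, hxz, hzy, -⟩ := hup hlt
    have harc : IsArc le A k j := Or.inr hk
    by_cases hxz' : x = z
    · subst hxz'
      obtain rfl := hA.index_eq hx hz
      exact arc harc hx hy hxy
    · have hkj : k.1 < j.1 := hk.1
      have hij' : i.1 < j.1 := hlt
      exact trans hx hz hy hxz hzy (ih _ (by omega) hx hz hxz hxz' rfl) (arc harc hz hy hzy)
  · obtain ⟨k, hk, z, hz, hxz, -, hzy⟩ := hdown hlt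
    have harc : IsArc le A i k := Or.inl hk
    by_cases hzy' : z = y
    · subst hzy'
      obtain rfl := hA.index_eq hz hy
      exact arc harc hx hy hxy
    · have hki : k.1 < i.1 := hk.1
      have hji : j.1 < i.1 := hlt
      exact trans hx hz hy hxz hzy (arc harc hx hz hxz) (ih _ (by omega) hz hy hzy hzy' rfl)

theorem exists_bijOn_of_le [IsTrans α le] (hA : IsRegularPoset le w A) (hx : x ∈ A i)
    (hy : y ∈ A j) (hxy : le x y) (hne : x ≠ y) :
    ∃ f : α → α, Set.BijOn f (A i) (A j) ∧ (∀ a ∈ A i, le a (f a)) ∧ f x = y :=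
  hA.arc_induction
    (Q := fun i x j y => ∃ f : α → α, Set.BijOn f (A i) (A j) ∧ (∀ a ∈ A i, le a (f a)) ∧ f x = y)
    (fun h hx hy hxy => (hA.isCore_of_isArc h).2 _ hx _ hy hxy)
    (fun _ _ _ _ _ ⟨f, hf, hfle, hfx⟩ ⟨g, hg, hgle, hgy⟩ =>
      ⟨g ∘ f, hg.comp hf, fun a ha => trans_of le (hfle a ha) (hgle _ (hf.mapsTo ha)),
        by rw [Function.comp_apply, hfx, hgy]⟩)
    hx hy hxy hne

open Classical in
theorem level_mono [IsTrans α le] (h : Below le (A i) (A j)) : level le A i ≤ level le A j :=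
  card_le_card fun _ hk => mem_filter.mpr ⟨mem_univ _, (mem_filter.mp hk).2.trans h⟩

open Classical in
theorem level_lt_of_not_below [IsPreorder α le] (hji : Below le (A j) (A i))
    (hij : ¬ Below le (A i) (A j)) : level le A j < level le A i := by
  refine card_lt_card ((ssubset_iff_of_subset fun _ hk =>
    mem_filter.mpr ⟨mem_univ _, (mem_filter.mp hk).2.trans hji⟩).mpr ⟨i, ?_, ?_⟩)
  · exact mem_filter.mpr ⟨mem_univ _, Below.refl _⟩
  · exact fun hi => hij (mem_filter.mp hi).2

theorem level_le_level_iff [IsPreorder α le] (hA : IsRegularPoset le w A) :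
    level le A i ≤ level le A j ↔ Below le (A i) (A j) := by
  refine ⟨fun h => ?_, level_mono⟩
  by_contra hij
  exact (level_lt_of_not_below ((hA.2.2.2.2.2.1 i j).resolve_left hij) hij).not_ge h

theorem level_lt_of_le_of_ne [IsPartialOrder α le] (hA : IsRegularPoset le w A) (hx : x ∈ A i)
    (hy : y ∈ A j) (hxy : le x y) (hne : x ≠ y) : level le A i < level le A j := by
  refine lt_of_not_ge fun h => ?_
  obtain ⟨a, ha, hya⟩ := (hA.level_le_level_iff.mp h) y hy
  obtain rfl := hA.eq_of_le hx ha (trans_of le hxy hya)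
  exact hne (antisymm_of le hxy hya)

theorem level_le_of_le [IsPartialOrder α le] (hA : IsRegularPoset le w A) (hx : x ∈ A i)
    (hy : y ∈ A j) (hxy : le x y) : level le A i ≤ level le A j := by
  by_cases hne : x = y
  · subst hne
    rw [hA.index_eq hx hy]
  · exact (hA.level_lt_of_le_of_ne hx hy hxy hne).le

theorem mem_of_level_eq [IsPartialOrder α le] (hA : IsRegularPoset le w A) (hx : x ∈ A i)
    (h : level le A i = level le A j) : x ∈ A j := by
  obtain ⟨y, hy, hxy⟩ := (hA.level_le_level_iff.mp h.le) x hx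
  obtain ⟨z, hz, hyz⟩ := (hA.level_le_level_iff.mp h.ge) y hy
  obtain rfl := hA.eq_of_le hx hz (trans_of le hxy hyz)
  rwa [antisymm_of le hxy hyz]

/-- Had `A k` been presented before the later end of the arc, it would have been a closer
neighbour than the earlier end. -/
theorem lt_of_isArc [IsPreorder α le] (hA : IsRegularPoset le w A) (h : IsArc le A i j)
    (hik : level le A i < level le A k) (hkj : level le A k < level le A j) : i < k ∧ j < k := by
  have hsb : ∀ {a b : Fin n}, level le A a < level le A b → StrictBelow le (A a) (A b) :=
    fun hab => ⟨hA.level_le_level_iff.mp hab.le, fun he => hab.ne (by unfold level; rw [he])⟩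
  rcases h with ⟨hji, -, hmin⟩ | ⟨hij, -, hmin⟩
  · have hik' : i < k := lt_of_not_ge fun hki =>
      (hmin k (hki.lt_of_ne (by rintro rfl; exact hik.false)) (hsb hik) |> level_mono).not_gt hkj
    exact ⟨hik', hji.trans hik'⟩
  · have hjk : j < k := lt_of_not_ge fun hkj' =>
      (hmin k (hkj'.lt_of_ne (by rintro rfl; exact hkj.false)) (hsb hkj) |> level_mono).not_gt hik
    exact ⟨hij.trans hjk, hjk⟩

/-- Arcs do not cross. -/
theorem level_le_of_isArc [IsPreorder α le] (hA : IsRegularPoset le w A) {a b a' b' : Fin n}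
    (h : IsArc le A a b) (h' : IsArc le A a' b') (haa' : level le A a < level le A a')
    (ha'b : level le A a' < level le A b) : level le A b' ≤ level le A b :=
  le_of_not_gt fun hbb' =>
    (hA.lt_of_isArc h haa' ha'b).2.asymm (hA.lt_of_isArc h' ha'b hbb').1

theorem exists_isArc_crossing [IsPreorder α le] (hA : IsRegularPoset le w A) {t : ℕ}
    (hx : x ∈ A i) (hy : y ∈ A j) (hxy : le x y) (hit : level le A i < t)
    (htj : t ≤ level le A j) :
    ∃ a b, IsArc le A a b ∧ level le A a < t ∧ t ≤ level le A b ∧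
      ∃ u ∈ A a, ∃ v ∈ A b, le x u ∧ le u v ∧ le v y := by
  have hne : x ≠ y := by
    rintro rfl
    rw [hA.index_eq hx hy] at hit
    omega
  refine hA.arc_induction (Q := fun i x j y => level le A i < t → t ≤ level le A j →
      ∃ a b, IsArc le A a b ∧ level le A a < t ∧ t ≤ level le A b ∧
        ∃ u ∈ A a, ∃ v ∈ A b, le x u ∧ le u v ∧ le v y)
    ?_ ?_ hx hy hxy hne hit htj
  · intro i j x y h hx hy hxy hit htj
    exact ⟨i, j, h, hit, htj, x, hx, y, hy, refl_of le x, hxy, refl_of le y⟩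
  · intro i j k x y z _ _ _ hxy hyz hxy' hyz' hit htk
    by_cases hjt : level le A j < t
    · obtain ⟨a, b, h, hat, htb, u, hu, v, hv, hyu, huv, hvz⟩ := hyz' hjt htk
      exact ⟨a, b, h, hat, htb, u, hu, v, hv, trans_of le hxy hyu, huv, hvz⟩
    · obtain ⟨a, b, h, hat, htb, u, hu, v, hv, hxu, huv, hvy⟩ := hxy' hit (not_lt.mp hjt)
      exact ⟨a, b, h, hat, htb, u, hu, v, hv, hxu, huv, trans_of le hvy hyz⟩

theorem exists_mem_between [IsPartialOrder α le] (hA : IsRegularPoset le w A) {L : Fin n}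
    (hx : x ∈ A i) (hy : y ∈ A j) (hxy : le x y) (hiL : level le A i ≤ level le A L)
    (hLj : level le A L ≤ level le A j)
    (hnoarc : ∀ a b, IsArc le A a b → level le A i ≤ level le A a →
      level le A b ≤ level le A j → level le A a < level le A L → level le A b ≤ level le A L) :
    ∃ z ∈ A L, le x z ∧ le z y := by
  by_cases hne : x = y
  · subst hne
    obtain rfl := hA.index_eq hx hy
    exact ⟨x, hA.mem_of_level_eq hx (hiL.antisymm hLj), refl_of le x, refl_of le x⟩
  refine hA.arc_induction (Q := fun i x j y => level le A i ≤ level le A L →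
      level le A L ≤ level le A j →
      (∀ a b, IsArc le A a b → level le A i ≤ level le A a → level le A b ≤ level le A j →
        level le A a < level le A L → level le A b ≤ level le A L) →
      ∃ z ∈ A L, le x z ∧ le z y)
    ?_ ?_ hx hy hxy hne hiL hLj hnoarc
  · intro i j x y h hx hy hxy hiL hLj hnoarc
    rcases hiL.lt_or_eq with hiL | hiL
    · have hjL := hnoarc i j h le_rfl le_rfl hiL
      exact ⟨y, hA.mem_of_level_eq hy (hjL.antisymm hLj), hxy, refl_of le y⟩
    · exact ⟨x, hA.mem_of_level_eq hx hiL, refl_of le x, hxy⟩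
  · intro i j k x y z hx hy hz hxy hyz hxy' hyz' hiL hLk hnoarc
    by_cases hLj : level le A L ≤ level le A j
    · obtain ⟨u, hu, hxu, huy⟩ := hxy' hiL hLj fun a b h ha hb =>
        hnoarc a b h ha (hb.trans (hA.level_le_of_le hy hz hyz))
      exact ⟨u, hu, hxu, trans_of le huy hyz⟩
    · obtain ⟨u, hu, hyu, huz⟩ := hyz' (not_le.mp hLj).le hLk fun a b h ha hb =>
        hnoarc a b h ((hA.level_le_of_le hx hy hxy).trans ha) hb
      exact ⟨u, hu, trans_of le hxy hyu, huz⟩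

end IsRegularPoset

open Classical in
noncomputable def pointsAbove {α : Type*} (le : α → α → Prop) {m : ℕ} (y : Fin m → α)
    (S : Finset α) (r : Fin m) : Finset α :=
  S.filter fun z => ∃ j < r, le (y j) z

namespace IsLadderIn

variable {α : Type*} {le : α → α → Prop} {m : ℕ} {x y : Fin m → α} {r s : Fin m}

theorem lower_le [Std.Refl le] (hL : IsLadderIn le x y) (h : r ≤ s) : le (x r) (x s) := by
  rcases h.lt_or_eq with h | rfl
  exacts [(hL.1 r s h).1, refl_of le _]

theorem upper_le [Std.Refl le] (hL : IsLadderIn le x y) (h : r ≤ s) : le (y r) (y s) := by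
  rcases h.lt_or_eq with h | rfl
  exacts [(hL.2.1 r s h).1, refl_of le _]

theorem rung_le (hL : IsLadderIn le x y) (r : Fin m) : le (x r) (y r) := (hL.2.2.1 r).1

theorem rung_ne (hL : IsLadderIn le x y) (r : Fin m) : x r ≠ y r := (hL.2.2.1 r).2

theorem not_upper_le_lower (hL : IsLadderIn le x y) (h : r < s) : ¬ le (y r) (x s) :=
  (hL.2.2.2 r s h).1

theorem not_lower_le_upper (hL : IsLadderIn le x y) (h : r < s) : ¬ le (x s) (y r) :=
  (hL.2.2.2 r s h).2

/-- Distinct rungs cannot share a point between their legs. -/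
theorem card_le_of_forall_between [IsTrans α le] (hL : IsLadderIn le x y) {T : Finset (Fin m)}
    {S : Finset α} (h : ∀ r ∈ T, ∃ z ∈ S, le (x r) z ∧ le z (y r)) : #T ≤ #S := by
  refine card_le_card_of_forall_subsingleton (fun r z => le (x r) z ∧ le z (y r))
    (fun r hr => by simpa using h r hr) fun z _ r ⟨_, hxr, hzr⟩ s ⟨_, hxs, hzs⟩ => ?_
  by_contra hne
  rcases lt_or_gt_of_ne hne with h | h
  · exact hL.not_lower_le_upper h (trans_of le hxs hzr)
  · exact hL.not_lower_le_upper h (trans_of le hxr hzs)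

open Classical in
theorem card_pointsAbove_lt (hL : IsLadderIn le x y) {S : Finset α} (hxS : x r ∈ S) :
    #(pointsAbove le y S r) < #S :=
  card_lt_card (filter_ssubset.mpr ⟨x r, hxS, fun ⟨_, hj, h⟩ => hL.not_upper_le_lower hj h⟩)

end IsLadderIn

namespace IsRegularPoset

open IsLadderIn

variable {α : Type*} {le : α → α → Prop} [IsPartialOrder α le] {w n m : ℕ}
  {A : Fin n → Finset α} {x y : Fin m → α} {ix iy : Fin m → Fin n}

open Classical in
/-- If rung `r` lies below rung `s`, a dominating bijection from level `ix r` to level `ix s`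
that sends `x r` above `y r` carries the points above earlier rungs, and `x r`, into the points
above rungs before `s`. -/
theorem card_pointsAbove_lt_card_pointsAbove (hA : IsRegularPoset le w A)
    (hL : IsLadderIn le x y) (hix : ∀ r, x r ∈ A (ix r)) (hiy : ∀ r, y r ∈ A (iy r))
    {r s : Fin m} (hrs : r < s) (hbelow : Below le (A (iy r)) (A (ix s))) :
    #(pointsAbove le y (A (ix r)) r) < #(pointsAbove le y (A (ix s)) s) := by
  obtain ⟨b, hb, hyb⟩ := hbelow (y r) (hiy r)
  have hxb : x r ≠ b := by
    rintro rfl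
    exact hL.rung_ne r (antisymm_of le (hL.rung_le r) hyb)
  obtain ⟨f, hf, hfle, hfx⟩ :=
    hA.exists_bijOn_of_le (hix r) hb (trans_of le (hL.rung_le r) hyb) hxb
  set N := pointsAbove le y (A (ix r)) r
  have hxN : x r ∉ N := fun h => by
    obtain ⟨-, j, hj, hyx⟩ := mem_filter.mp h
    exact hL.not_upper_le_lower hj hyx
  have hsub : insert (x r) N ⊆ A (ix r) := insert_subset (hix r) (filter_subset _ _)
  calc #N < #(insert (x r) N) := by rw [card_insert_of_notMem hxN]; omega
    _ = #((insert (x r) N).image f) := (card_image_of_injOn (hf.injOn.mono hsub)).symm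
    _ ≤ #(pointsAbove le y (A (ix s)) s) := by
      refine card_le_card fun z hz => ?_
      obtain ⟨a, ha, rfl⟩ := mem_image.mp hz
      refine mem_filter.mpr ⟨hf.mapsTo (hsub ha), ?_⟩
      rcases mem_insert.mp ha with rfl | ha
      · exact ⟨r, hrs, hfx ▸ hyb⟩
      · obtain ⟨-, j, hj, hya⟩ := mem_filter.mp ha
        exact ⟨j, hj.trans hrs, trans_of le hya (hfle a (filter_subset _ _ ha))⟩

/-- Each rung crosses level `t` along an arc, and these arcs are nested. Every rung passes through
an end of the outermost one: the lower end for the rungs up to the one using it, the upper end for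
the rungs from it on. -/
theorem card_le_of_forall_level_between (hA : IsRegularPoset le w A) (hL : IsLadderIn le x y)
    (hix : ∀ r, x r ∈ A (ix r)) (hiy : ∀ r, y r ∈ A (iy r)) {R : Finset (Fin m)} {t : ℕ}
    (hR : ∀ r ∈ R, level le A (ix r) < t ∧ t ≤ level le A (iy r)) : #R ≤ 2 * w := by
  rcases R.eq_empty_or_nonempty with rfl | ⟨r₁, hr₁⟩
  · simp
  have : Nonempty (Fin n) := ⟨ix r₁⟩
  have : Nonempty α := ⟨x r₁⟩
  choose! a b harc hat htb u hu v hv hxu huv hvy using fun r hr =>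
    hA.exists_isArc_crossing (hix r) (hiy r) (hL.rung_le r) (hR r hr).1 (hR r hr).2
  obtain ⟨r₀, hr₀, hmax⟩ :=
    R.exists_max_image (fun r => level le A (b r) - level le A (a r)) ⟨r₁, hr₁⟩
  have hnest : ∀ r ∈ R, level le A (a r₀) ≤ level le A (a r) ∧
      level le A (b r) ≤ level le A (b r₀) := by
    intro r hr
    have := hmax r hr
    have := hat r hr; have := htb r hr; have := hat r₀ hr₀; have := htb r₀ hr₀
    rcases lt_trichotomy (level le A (a r)) (level le A (a r₀)) with h | h | h
    · have := hA.level_le_of_isArc (harc r hr) (harc r₀ hr₀) h (by omega)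
      omega
    · omega
    · have := hA.level_le_of_isArc (harc r₀ hr₀) (harc r hr) h (by omega)
      omega
  have hlower : ∀ r ∈ R, r ≤ r₀ → ∃ z ∈ A (a r₀), le (x r) z ∧ le z (y r) := by
    intro r hr hrr₀
    have hxa : level le A (ix r) ≤ level le A (a r₀) :=
      (hA.level_le_of_le (hix r) (hix r₀) (hL.lower_le hrr₀)).trans
        (hA.level_le_of_le (hix r₀) (hu r₀ hr₀) (hxu r₀ hr₀))
    obtain ⟨z, hz, hxz, hzu⟩ := hA.exists_mem_between (hix r) (hu r hr) (hxu r hr) hxa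
      (hnest r hr).1 fun c d hcd _ hd hc => le_of_not_gt fun hd' => by
        have := hA.level_le_of_isArc hcd (harc r₀ hr₀) hc hd'
        have := hat r hr; have := htb r₀ hr₀
        omega
    exact ⟨z, hz, hxz, trans_of le hzu (trans_of le (huv r hr) (hvy r hr))⟩
  have hupper : ∀ r ∈ R, r₀ ≤ r → ∃ z ∈ A (b r₀), le (x r) z ∧ le z (y r) := by
    intro r hr hr₀r
    have hby : level le A (b r₀) ≤ level le A (iy r) :=
      (hA.level_le_of_le (hv r₀ hr₀) (hiy r₀) (hvy r₀ hr₀)).trans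
        (hA.level_le_of_le (hiy r₀) (hiy r) (hL.upper_le hr₀r))
    obtain ⟨z, hz, hvz, hzy⟩ := hA.exists_mem_between (hv r hr) (hiy r) (hvy r hr)
      (hnest r hr).2 hby fun c d hcd hc _ hcb => by
        refine hA.level_le_of_isArc (harc r₀ hr₀) hcd ?_ hcb
        have := hat r₀ hr₀; have := htb r hr
        omega
    exact ⟨z, hz, trans_of le (hxu r hr) (trans_of le (huv r hr) hvz), hzy⟩
  rw [← card_filter_add_card_filter_not (s := R) (· ≤ r₀), two_mul]
  refine add_le_add ((hL.card_le_of_forall_between (S := A (a r₀)) fun r hr => ?_).trans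
    (hA.card_eq _).le) ((hL.card_le_of_forall_between (S := A (b r₀)) fun r hr => ?_).trans
    (hA.card_eq _).le)
  · exact hlower r (mem_filter.mp hr).1 (mem_filter.mp hr).2
  · exact hupper r (mem_filter.mp hr).1 (not_le.mp (mem_filter.mp hr).2).le

theorem card_le_of_pairwise_overlap (hA : IsRegularPoset le w A) (hL : IsLadderIn le x y)
    (hix : ∀ r, x r ∈ A (ix r)) (hiy : ∀ r, y r ∈ A (iy r)) {R : Finset (Fin m)}
    (hR : ∀ r ∈ R, ∀ s ∈ R, r < s → level le A (ix s) < level le A (iy r)) : #R ≤ 2 * w := by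
  have hrung : ∀ r, level le A (ix r) < level le A (iy r) := fun r =>
    hA.level_lt_of_le_of_ne (hix r) (hiy r) (hL.rung_le r) (hL.rung_ne r)
  refine hA.card_le_of_forall_level_between hL hix hiy
    (t := R.sup (fun r => level le A (ix r)) + 1) fun r hr => ⟨?_, ?_⟩
  · exact Nat.lt_succ_of_le (le_sup (f := fun r => level le A (ix r)) hr)
  · refine Nat.succ_le_of_lt ((Finset.sup_lt_iff ((Nat.zero_le _).trans_lt (hrung r))).mpr
      fun s hs => ?_)
    rcases lt_or_ge r s with hrs | hsr
    · exact hR r hr s hs hrs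
    · exact (hA.level_le_of_le (hix s) (hix r) (hL.lower_le hsr)).trans_lt (hrung r)

end IsRegularPoset

theorem stmt_7_general {α : Type} (le : α → α → Prop)
    (hle : IsPartialOrder α le) (w : ℕ) {n : ℕ} (A : Fin n → Finset α)
    (hreg : IsRegularPoset le w A) :
    LFree le (2 * w ^ 2 + 1) := by
  rintro ⟨x, y, hL⟩
  choose ix hix using fun r => hreg.1 (x r)
  choose iy hiy using fun r => hreg.1 (y r)
  obtain ⟨k, -, hk⟩ := exists_lt_card_fiber_of_mul_lt_card_of_maps_to (s := univ)
    (t := range w) (n := 2 * w) (f := fun r => #(pointsAbove le y (A (ix r)) r))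
    (fun r _ => mem_range.mpr ((hL.card_pointsAbove_lt (hix r)).trans_eq (hreg.card_eq _)))
    (by simp only [card_range, card_univ, Fintype.card_fin]; nlinarith)
  refine (hreg.card_le_of_pairwise_overlap hL hix hiy fun r hr s hs hrs => ?_).not_gt hk
  refine lt_of_not_ge fun h => (hreg.card_pointsAbove_lt_card_pointsAbove hL hix hiy hrs
    (hreg.level_le_level_iff.mp h)).ne ?_
  rw [(mem_filter.mp hr).2, (mem_filter.mp hs).2]

/-- A regular poset of width `w` contains no induced copy of the
`(2w²+1)`-ladder. -/
theorem stmt_7 {α : Type} [Fintype α] (le : α → α → Prop)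
    (hle : IsPartialOrder α le) (w : ℕ) {n : ℕ} (A : Fin n → Finset α)
    (hreg : IsRegularPoset le w A) :
    LFree le (2 * w ^ 2 + 1) :=
  stmt_7_general le hle w A hreg
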